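/- For the rule-B vector fields Z₁, Z₂, Z₃ on ℝ⁶, the identity [Z₁ − Z₂, Z₁ − Z₃](m) ∧ (Z₁ − Z₂)(m) ∧ (Z₃ − Z₁)(m) = 3 · Z₃(m) ∧ Z₂(m) ∧ Z₁(m) holds in the exterior algebra of ℝ⁶ for every point m; in particular, at every m where Z₁(m), Z₂(m), Z₃(m) are linearly independent, the three vectors (Z₁−Z₂)(m), (Z₃−Z₁)(m), [Z₁−Z₂, Z₃−Z₁](m) are linearly independent. -/
import Mathlib

def xc (i : Fin 3) : Fin 6 := ⟨2 * i.val, by have := i.isLt; omega⟩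

def yc (i : Fin 3) : Fin 6 := ⟨2 * i.val + 1, by have := i.isLt; omega⟩

noncomputable def lieBracket (V W : (Fin 6 → ℝ) → (Fin 6 → ℝ)) :
    (Fin 6 → ℝ) → (Fin 6 → ℝ) :=
  fun m => fderiv ℝ W m (V m) - fderiv ℝ V m (W m)

/-- Rule-B vector fields. -/
def ZB (i : Fin 3) (m : Fin 6 → ℝ) : Fin 6 → ℝ := fun j =>
  if j = xc i then m (xc (i + 1)) - m (xc (i + 2))
  else if j = yc i then m (yc (i + 1)) - m (yc (i + 2))
  else 0

/-- `ZB i` as a linear map. -/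
def Zlin (i : Fin 3) : (Fin 6 → ℝ) →ₗ[ℝ] (Fin 6 → ℝ) where
  toFun := ZB i
  map_add' a b := by funext j; simp only [ZB, Pi.add_apply]; split_ifs <;> ring
  map_smul' r a := by
    funext j; simp only [ZB, Pi.smul_apply, RingHom.id_apply, smul_eq_mul]
    split_ifs <;> ring

lemma ZB_sub_eq (i j : Fin 3) :
    (ZB i - ZB j) = ⇑((Zlin i - Zlin j).toContinuousLinearMap) := by
  funext m k
  simp only [Pi.sub_apply, LinearMap.coe_toContinuousLinearMap', LinearMap.sub_apply]
  rfl

lemma ZB_comp_eval (m : Fin 6 → ℝ) :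
    (ZB 0 (ZB 0 m - ZB 1 m) - ZB 2 (ZB 0 m - ZB 1 m)) -
      (ZB 0 (ZB 0 m - ZB 2 m) - ZB 1 (ZB 0 m - ZB 2 m)) = ZB 0 m + ZB 1 m + ZB 2 m := by
  funext j
  simp only [ZB, xc, yc, Pi.sub_apply, Pi.add_apply,
    show (0+1 : Fin 3) = 1 from rfl, show (0+2 : Fin 3) = 2 from rfl,
    show (1+1 : Fin 3) = 2 from rfl, show (1+2 : Fin 3) = 0 from rfl,
    show (2+1 : Fin 3) = 0 from rfl, show (2+2 : Fin 3) = 1 from rfl,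
    show ((0 : Fin 3) : ℕ) = 0 from rfl, show ((1 : Fin 3) : ℕ) = 1 from rfl,
    show ((2 : Fin 3) : ℕ) = 2 from rfl, Fin.mk.injEq]
  norm_num
  split_ifs <;> ring

lemma ZB_comp_eval' (m : Fin 6 → ℝ) :
    (ZB 2 (ZB 0 m - ZB 1 m) - ZB 0 (ZB 0 m - ZB 1 m)) -
      (ZB 0 (ZB 2 m - ZB 0 m) - ZB 1 (ZB 2 m - ZB 0 m))
      = -(ZB 0 m + ZB 1 m + ZB 2 m) := by
  funext j
  simp only [ZB, xc, yc, Pi.sub_apply, Pi.add_apply, Pi.neg_apply,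
    show (0+1 : Fin 3) = 1 from rfl, show (0+2 : Fin 3) = 2 from rfl,
    show (1+1 : Fin 3) = 2 from rfl, show (1+2 : Fin 3) = 0 from rfl,
    show (2+1 : Fin 3) = 0 from rfl, show (2+2 : Fin 3) = 1 from rfl,
    show ((0 : Fin 3) : ℕ) = 0 from rfl, show ((1 : Fin 3) : ℕ) = 1 from rfl,
    show ((2 : Fin 3) : ℕ) = 2 from rfl, Fin.mk.injEq]
  norm_num
  split_ifs <;> ring

lemma bracket_eval (m : Fin 6 → ℝ) :
    lieBracket (ZB 0 - ZB 1) (ZB 0 - ZB 2) m = ZB 0 m + ZB 1 m + ZB 2 m := by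
  unfold lieBracket
  rw [ZB_sub_eq 0 1, ZB_sub_eq 0 2]
  rw [ContinuousLinearMap.fderiv, ContinuousLinearMap.fderiv]
  simp only [LinearMap.coe_toContinuousLinearMap', LinearMap.sub_apply, Pi.sub_apply]
  exact ZB_comp_eval m

lemma bracket_eval' (m : Fin 6 → ℝ) :
    lieBracket (ZB 0 - ZB 1) (ZB 2 - ZB 0) m = -(ZB 0 m + ZB 1 m + ZB 2 m) := by
  unfold lieBracket
  rw [ZB_sub_eq 0 1, ZB_sub_eq 2 0]
  rw [ContinuousLinearMap.fderiv, ContinuousLinearMap.fderiv]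
  simp only [LinearMap.coe_toContinuousLinearMap', LinearMap.sub_apply, Pi.sub_apply]
  exact ZB_comp_eval' m

lemma wedge3 {A : Type*} [Ring A] (a b c : A)
    (haa : a * a = 0) (hbb : b * b = 0) (hcc : c * c = 0)
    (hba : b * a = -(a * b)) (hca : c * a = -(a * c)) (hcb : c * b = -(b * c)) :
    (a + b + c) * (a - b) * (c - a) = (c * b * a) + (c * b * a) + (c * b * a) := by
  have haa' : ∀ x : A, a * (a * x) = 0 := fun x => by rw [← mul_assoc, haa, zero_mul]
  have hbb' : ∀ x : A, b * (b * x) = 0 := fun x => by rw [← mul_assoc, hbb, zero_mul]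
  have hcc' : ∀ x : A, c * (c * x) = 0 := fun x => by rw [← mul_assoc, hcc, zero_mul]
  have hba' : ∀ x : A, b * (a * x) = -(a * (b * x)) := fun x => by
    rw [← mul_assoc, hba, ← mul_assoc, neg_mul]
  have hca' : ∀ x : A, c * (a * x) = -(a * (c * x)) := fun x => by
    rw [← mul_assoc, hca, ← mul_assoc, neg_mul]
  have hcb' : ∀ x : A, c * (b * x) = -(b * (c * x)) := fun x => by
    rw [← mul_assoc, hcb, ← mul_assoc, neg_mul]
  simp only [add_mul, sub_mul, mul_sub, mul_add, mul_assoc,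
    haa, hbb, hcc, hba, hca, hcb, haa', hbb', hcc', hba', hca', hcb',
    mul_neg, neg_mul, mul_zero, zero_mul, neg_neg,
    sub_zero, zero_sub, sub_neg_eq_add, neg_zero]
  abel

open ExteriorAlgebra in
theorem ruleB_wedge_identity (m : Fin 6 → ℝ) :
    (ι ℝ (lieBracket (ZB 0 - ZB 1) (ZB 0 - ZB 2) m) *
      ι ℝ ((ZB 0 - ZB 1) m) * ι ℝ ((ZB 2 - ZB 0) m)
      = (3 : ℝ) • (ι ℝ (ZB 2 m) * ι ℝ (ZB 1 m) * ι ℝ (ZB 0 m))) ∧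
    (LinearIndependent ℝ ![ZB 0 m, ZB 1 m, ZB 2 m] →
      LinearIndependent ℝ
        ![(ZB 0 - ZB 1) m, (ZB 2 - ZB 0) m, lieBracket (ZB 0 - ZB 1) (ZB 2 - ZB 0) m]) := by
  constructor
  · rw [bracket_eval m]
    have h1 : (ZB 0 - ZB 1) m = ZB 0 m - ZB 1 m := rfl
    have h2 : (ZB 2 - ZB 0) m = ZB 2 m - ZB 0 m := rfl
    rw [h1, h2]
    set a := ZB 0 m
    set b := ZB 1 m
    set c := ZB 2 m
    have key := wedge3 (ι ℝ a) (ι ℝ b) (ι ℝ c)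
      (ι_sq_zero a) (ι_sq_zero b) (ι_sq_zero c)
      (eq_neg_of_add_eq_zero_right (ι_add_mul_swap a b))
      (eq_neg_of_add_eq_zero_right (ι_add_mul_swap a c))
      (eq_neg_of_add_eq_zero_right (ι_add_mul_swap b c))
    rw [map_add, map_add, map_sub, map_sub, key]
    rw [show (3 : ℝ) • (ι ℝ c * ι ℝ b * ι ℝ a)
      = (ι ℝ c * ι ℝ b * ι ℝ a) + (ι ℝ c * ι ℝ b * ι ℝ a) + (ι ℝ c * ι ℝ b * ι ℝ a) from by
        module]
  · intro h
    rw [bracket_eval' m]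
    have h1 : (ZB 0 - ZB 1) m = ZB 0 m - ZB 1 m := rfl
    have h2 : (ZB 2 - ZB 0) m = ZB 2 m - ZB 0 m := rfl
    rw [h1, h2]
    set a := ZB 0 m
    set b := ZB 1 m
    set c := ZB 2 m
    rw [Fintype.linearIndependent_iff] at h ⊢
    intro g hg
    have hsum : (g 0 - g 1 - g 2) • a + (-g 0 - g 2) • b + (g 1 - g 2) • c = 0 := by
      rw [← hg]
      simp only [Fin.sum_univ_three, Matrix.cons_val_zero, Matrix.cons_val_one,
        Matrix.head_cons, Matrix.cons_val_two, Matrix.tail_cons]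
      module
    have h' := h ![g 0 - g 1 - g 2, -g 0 - g 2, g 1 - g 2] (by
      simpa only [Fin.sum_univ_three, Matrix.cons_val_zero, Matrix.cons_val_one,
        Matrix.head_cons, Matrix.cons_val_two, Matrix.tail_cons] using hsum)
    have e0 := h' 0
    have e1 := h' 1
    have e2 := h' 2
    simp only [Matrix.cons_val_zero, Matrix.cons_val_one, Matrix.head_cons,
      Matrix.cons_val_two, Matrix.tail_cons] at e0 e1 e2
    intro i
    fin_cases i <;> simp <;> linarith
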